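/- arXiv:2105.10409 — 2 statements merged into one kernel-verified Lean document; each statement's English description precedes it below -/
import Mathlib

section
/- Let V be a finite-dimensional real inner product space, W a normed space, b : V × W → ℝ a bilinear form satisfying β‖w‖_W ≤ sup_{v ∈ V \ {0}} b(v,w)/‖v‖_V for all w ∈ W. Let Z = {v ∈ V : b(v,w) = 0 ∀ w ∈ W} and Z⊥ its orthogonal complement in V. Then for every w ∈ Z⊥, β‖w‖_V ≤ sup_{(q) ∈ W \ {0}} b(w,q)/‖q‖_W. -/
/-!
Represent `b · q` by its Riesz vector `T q = b.bilinRiesz q ∈ V`, so that `⟪T q, v⟫ = b v q`. The inf-sup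
condition reads `β ‖q‖ ≤ ‖T q‖`; hence `T` is injective and `W` is finite-dimensional. The
kernel `Z` is `(range T)ᗮ`, so `Zᗮ = range T`. For `w = T q` we get
`β ‖w‖ ‖q‖ ≤ ‖w‖² = b w q`, i.e. `β ‖w‖ ≤ b w q / ‖q‖`.
-/

open RealInnerProductSpace

lemma iSup_inner_div_norm_le {V : Type*} [NormedAddCommGroup V] [InnerProductSpace ℝ V] (u : V) :
    ⨆ v : {v : V // v ≠ 0}, ⟪u, v.1⟫ / ‖v.1‖ ≤ ‖u‖ :=
  Real.iSup_le (fun v => div_le_of_le_mul₀ (norm_nonneg _) (norm_nonneg _)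
    (real_inner_le_norm u v.1)) (norm_nonneg u)

lemma le_ciSup_div_norm {W : Type*} [NormedAddCommGroup W] [NormedSpace ℝ W]
    [FiniteDimensional ℝ W] (f : W →ₗ[ℝ] ℝ) (q : {q : W // q ≠ 0}) :
    f q.1 / ‖q.1‖ ≤ ⨆ p : {p : W // p ≠ 0}, f p.1 / ‖p.1‖ := by
  refine le_ciSup (f := fun p : {p : W // p ≠ 0} => f p.1 / ‖p.1‖)
    ⟨‖LinearMap.toContinuousLinearMap f‖, ?_⟩ q
  rintro _ ⟨p, rfl⟩
  refine div_le_of_le_mul₀ (norm_nonneg _) (norm_nonneg _) ?_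
  exact (le_abs_self _).trans ((LinearMap.toContinuousLinearMap f).le_opNorm p.1)

namespace LinearMap

variable {V W : Type*} [NormedAddCommGroup V] [InnerProductSpace ℝ V] [FiniteDimensional ℝ V]
  [NormedAddCommGroup W] [NormedSpace ℝ W]

noncomputable def bilinRiesz (b : V →ₗ[ℝ] W →ₗ[ℝ] ℝ) : W →ₗ[ℝ] V :=
  (InnerProductSpace.toDual ℝ V).symm.toLinearEquiv.toLinearMap ∘ₗ
    (LinearMap.toContinuousLinearMap : (V →ₗ[ℝ] ℝ) ≃ₗ[ℝ] V →L[ℝ] ℝ).toLinearMap ∘ₗ b.flip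

@[simp]
lemma inner_bilinRiesz_apply (b : V →ₗ[ℝ] W →ₗ[ℝ] ℝ) (q : W) (v : V) :
    ⟪b.bilinRiesz q, v⟫ = b v q := by
  simp [bilinRiesz, InnerProductSpace.toDual_symm_apply]

lemma iInf_ker_flip_eq_orthogonal_range_bilinRiesz (b : V →ₗ[ℝ] W →ₗ[ℝ] ℝ) :
    ⨅ μ : W, ker (b.flip μ) = (range b.bilinRiesz)ᗮ := by
  ext v
  simp [Submodule.mem_orthogonal]

lemma orthogonal_iInf_ker_flip (b : V →ₗ[ℝ] W →ₗ[ℝ] ℝ) :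
    (⨅ μ : W, ker (b.flip μ))ᗮ = range b.bilinRiesz := by
  rw [iInf_ker_flip_eq_orthogonal_range_bilinRiesz, Submodule.orthogonal_orthogonal]

lemma mul_norm_le_norm_bilinRiesz {b : V →ₗ[ℝ] W →ₗ[ℝ] ℝ} {β : ℝ}
    (hinfsup : ∀ w : W, β * ‖w‖ ≤ ⨆ v : {v : V // v ≠ 0}, b v.1 w / ‖v.1‖) (q : W) :
    β * ‖q‖ ≤ ‖b.bilinRiesz q‖ := by
  have := iSup_inner_div_norm_le (b.bilinRiesz q)
  simp only [inner_bilinRiesz_apply] at this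
  exact (hinfsup q).trans this

lemma injective_bilinRiesz {b : V →ₗ[ℝ] W →ₗ[ℝ] ℝ} {β : ℝ} (hβ : 0 < β)
    (hinfsup : ∀ w : W, β * ‖w‖ ≤ ⨆ v : {v : V // v ≠ 0}, b v.1 w / ‖v.1‖) :
    Function.Injective b.bilinRiesz := by
  refine (injective_iff_map_eq_zero _).2 fun q hq => norm_le_zero_iff.1 ?_
  have := mul_norm_le_norm_bilinRiesz hinfsup q
  rw [hq, norm_zero] at this
  exact nonpos_of_mul_nonpos_right this hβ

end LinearMap

open LinearMap in
/-- inf-sup implies dual inf-sup on the orthogonal complement of the kernel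
(Brenner–Scott Lemma 12.5.10). -/
theorem stmt_8 {V W : Type*} [NormedAddCommGroup V] [InnerProductSpace ℝ V]
    [FiniteDimensional ℝ V] [NormedAddCommGroup W] [NormedSpace ℝ W]
    (b : V →ₗ[ℝ] W →ₗ[ℝ] ℝ) (β : ℝ) (hβ : 0 < β)
    (hinfsup : ∀ w : W, β * ‖w‖ ≤ ⨆ v : {v : V // v ≠ 0}, b v.1 w / ‖v.1‖) :
    ∀ w : V, w ∈ (⨅ μ : W, LinearMap.ker (b.flip μ))ᗮ →
      β * ‖w‖ ≤ ⨆ q : {q : W // q ≠ 0}, b w q.1 / ‖q.1‖ := by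
  have : FiniteDimensional ℝ W := .of_injective _ (injective_bilinRiesz hβ hinfsup)
  intro w hw
  rw [orthogonal_iInf_ker_flip] at hw
  obtain ⟨q, rfl⟩ := hw
  rcases eq_or_ne q 0 with rfl | hq
  · simp
  have key : β * ‖b.bilinRiesz q‖ * ‖q‖ ≤ b (b.bilinRiesz q) q := by
    rw [← inner_bilinRiesz_apply, real_inner_self_eq_norm_mul_norm, mul_right_comm]
    exact mul_le_mul_of_nonneg_right (mul_norm_le_norm_bilinRiesz hinfsup q) (norm_nonneg _)
  calc β * ‖b.bilinRiesz q‖ ≤ b (b.bilinRiesz q) q / ‖q‖ :=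
        (le_div_iff₀ (norm_pos_iff.2 hq)).2 key
    _ ≤ _ := le_ciSup_div_norm (b (b.bilinRiesz q)) ⟨q, hq⟩
end

section
/- Let V be a finite-dimensional real inner product space, W a normed space, b : V × W → ℝ bilinear with inf-sup constant β > 0 (i.e., β‖w‖_W ≤ sup_{v≠0} b(v,w)/‖v‖ for all w ∈ W), and let Z = {v : b(v,·) = 0}. Let u be an element of an ambient normed space X ⊇ V with b extended boundedly to X × W (bound M), and suppose |b(u,w)| ≤ ε‖w‖_W for all w ∈ W. Then inf_{z ∈ Z} ‖u − z‖_X ≤ (1 + Cβ⁻¹) inf_{v ∈ V} ‖u − v‖_X + β⁻¹ε, where C depends only on M and the norm comparison between X and V. -/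
/-!
Given `v ∈ V`, subtract its orthogonal projection onto `Z = ker b`. The remainder `s` lies in `Zᗮ`,
which in finite dimension consists of the Riesz representatives of the functionals `b(·, w)`. If `s`
represents `b(·, w)`, the inf-sup condition gives `β‖w‖ ≤ ‖s‖`, while `‖s‖² = b(s, w) = b(v, w)`;
hence `β‖s‖` is bounded by the dual norm of `b(v, ·)`, which is at most `M‖u - v‖ + ε`, and
`v - s ∈ Z` is within `(1 + M/β)‖u - v‖ + ε/β` of `u`.
-/

open Metric RealInnerProductSpace

theorem Metric.infDist_le_mul_infDist_add {α : Type*} [PseudoMetricSpace α] {u : α}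
    {s t : Set α} (hs : s.Nonempty) {a c : ℝ} (ha : 0 ≤ a)
    (h : ∀ x ∈ s, infDist u t ≤ a * dist u x + c) :
    infDist u t ≤ a * infDist u s + c := by
  refine le_of_forall_pos_le_add fun δ hδ => ?_
  have hδ' : 0 < δ / (a + 1) := by positivity
  obtain ⟨x, hx, hxd⟩ := (infDist_lt_iff hs).1 (lt_add_of_pos_right (infDist u s) hδ')
  have hscaled : a * (δ / (a + 1)) ≤ δ := by
    rw [mul_div_assoc', div_le_iff₀ (by positivity)]
    nlinarith
  calc infDist u t ≤ a * dist u x + c := h x hx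
    _ ≤ a * (infDist u s + δ / (a + 1)) + c := by gcongr
    _ ≤ a * infDist u s + c + δ := by linarith

section InfSup

variable {E W : Type*} [NormedAddCommGroup E] [InnerProductSpace ℝ E] [FiniteDimensional ℝ E]

theorem LinearMap.exists_flip_eq_innerₗ_of_mem_orthogonal_ker [AddCommGroup W] [Module ℝ W]
    (A : E →ₗ[ℝ] W →ₗ[ℝ] ℝ) {s : E} (hs : s ∈ (LinearMap.ker A)ᗮ) :
    ∃ w, A.flip w = innerₗ E s := by
  have hker : LinearMap.ker A = (LinearMap.range A.flip).dualCoannihilator := by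
    ext t
    simp [LinearMap.ext_iff]
  have hann : innerₗ E s ∈ (LinearMap.ker A).dualAnnihilator :=
    (Submodule.mem_dualAnnihilator _).2 fun t ht => Submodule.inner_left_of_mem_orthogonal ht hs
  rwa [hker, Subspace.dualCoannihilator_dualAnnihilator_eq] at hann

variable [NormedAddCommGroup W] [NormedSpace ℝ W] (A : E →ₗ[ℝ] W →ₗ[ℝ] ℝ) {β c : ℝ}

theorem LinearMap.mul_norm_le_of_mem_orthogonal_ker
    (hA : ∀ w, β * ‖w‖ ≤ ‖LinearMap.toContinuousLinearMap (A.flip w)‖) (hβ : 0 ≤ β) (hc : 0 ≤ c)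
    {s : E} (hs : s ∈ (LinearMap.ker A)ᗮ)
    (hsc : ∀ w, |A s w| ≤ c * ‖w‖) : β * ‖s‖ ≤ c := by
  obtain ⟨w, hw⟩ := A.exists_flip_eq_innerₗ_of_mem_orthogonal_ker hs
  have hAw : ∀ t, A t w = ⟪s, t⟫ := fun t => LinearMap.congr_fun hw t
  have hβw : β * ‖w‖ ≤ ‖s‖ := (hA w).trans <| ContinuousLinearMap.opNorm_le_bound _ (norm_nonneg s)
    fun t => by simpa [hAw] using abs_real_inner_le_norm s t
  have hss : ‖s‖ * ‖s‖ ≤ c * ‖w‖ := by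
    rw [← real_inner_self_eq_norm_mul_norm, ← hAw]
    exact (le_abs_self _).trans (hsc w)
  rcases (norm_nonneg s).eq_or_lt with hs0 | hs0
  · simp [← hs0, hc]
  · refine le_of_mul_le_mul_right ?_ hs0
    calc β * ‖s‖ * ‖s‖ ≤ β * (c * ‖w‖) := by rw [mul_assoc]; gcongr
      _ = c * (β * ‖w‖) := by ring
      _ ≤ c * ‖s‖ := by gcongr

theorem LinearMap.exists_apply_eq_mul_norm_le
    (hA : ∀ w, β * ‖w‖ ≤ ‖LinearMap.toContinuousLinearMap (A.flip w)‖) (hβ : 0 ≤ β) (hc : 0 ≤ c)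
    (v : E) (hv : ∀ w, |A v w| ≤ c * ‖w‖) :
    ∃ s, A s = A v ∧ β * ‖s‖ ≤ c := by
  set K := LinearMap.ker A
  have hAs : A (v - K.starProjection v) = A v := by
    rw [map_sub, LinearMap.mem_ker.1 (K.starProjection_apply_mem v), sub_zero]
  refine ⟨v - K.starProjection v, hAs, A.mul_norm_le_of_mem_orthogonal_ker hA hβ hc
    (K.sub_starProjection_mem_orthogonal v) ?_⟩
  rwa [hAs]

end InfSup

section Kernel

variable {X W : Type*} [NormedAddCommGroup W] [NormedSpace ℝ W]

theorem mul_norm_le_opNorm_flip_domRestrict [NormedAddCommGroup X] [NormedSpace ℝ X]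
    (V : Submodule ℝ X) [FiniteDimensional ℝ V] (b : X →ₗ[ℝ] W →ₗ[ℝ] ℝ) {β : ℝ}
    (hinfsup : ∀ w : W, β * ‖w‖ ≤ ⨆ v : {v : X // v ∈ V ∧ v ≠ 0}, b v.1 w / ‖v.1‖) (w : W) :
    β * ‖w‖ ≤ ‖LinearMap.toContinuousLinearMap ((b.domRestrict V).flip w)‖ := by
  refine (hinfsup w).trans
    (Real.iSup_le (fun ⟨v, hV, hv0⟩ => ?_) (ContinuousLinearMap.opNorm_nonneg _))
  rw [div_le_iff₀ (norm_pos_iff.2 hv0)]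
  simpa using (le_abs_self _).trans
    ((LinearMap.toContinuousLinearMap ((b.domRestrict V).flip w)).le_opNorm ⟨v, hV⟩)

theorem infDist_ker_le_dist_add [NormedAddCommGroup X] [InnerProductSpace ℝ X]
    (V : Submodule ℝ X) [FiniteDimensional ℝ V] (b : X →ₗ[ℝ] W →ₗ[ℝ] ℝ) {β M ε : ℝ}
    (hβ : 0 < β) (hM : 0 ≤ M) (hε : 0 ≤ ε) (hbound : ∀ (x : X) (w : W), |b x w| ≤ M * ‖x‖ * ‖w‖)
    (hA : ∀ w, β * ‖w‖ ≤ ‖LinearMap.toContinuousLinearMap ((b.domRestrict V).flip w)‖)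
    {u : X} (hcons : ∀ w : W, |b u w| ≤ ε * ‖w‖) {x : X} (hx : x ∈ V) :
    infDist u {v : X | v ∈ V ∧ ∀ w : W, b v w = 0}
      ≤ (1 + M * β⁻¹) * dist u x + β⁻¹ * ε := by
  have hbx : ∀ w, |b.domRestrict V ⟨x, hx⟩ w| ≤ (M * ‖u - x‖ + ε) * ‖w‖ := fun w =>
    calc |b x w| = |b (x - u) w + b u w| := by simp
      _ ≤ M * ‖x - u‖ * ‖w‖ + ε * ‖w‖ := (abs_add_le _ _).trans (add_le_add (hbound _ _) (hcons w))
      _ = (M * ‖u - x‖ + ε) * ‖w‖ := by rw [norm_sub_rev]; ring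
  obtain ⟨s, hs, hsn⟩ :=
    (b.domRestrict V).exists_apply_eq_mul_norm_le hA hβ.le (by positivity) ⟨x, hx⟩ hbx
  have hmem : x - s ∈ {v : X | v ∈ V ∧ ∀ w : W, b v w = 0} :=
    ⟨V.sub_mem hx s.2, fun w => by simpa [sub_eq_zero] using (LinearMap.congr_fun hs w).symm⟩
  calc infDist u _ ≤ dist u (x - s) := infDist_le_dist_of_mem hmem
    _ = ‖(u - x) + s‖ := by rw [dist_eq_norm]; congr 1; abel
    _ ≤ ‖u - x‖ + ‖s‖ := norm_add_le _ _
    _ ≤ ‖u - x‖ + β⁻¹ * (M * ‖u - x‖ + ε) := by gcongr; rwa [le_inv_mul_iff₀ hβ]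
    _ = (1 + M * β⁻¹) * dist u x + β⁻¹ * ε := by rw [dist_eq_norm]; ring

end Kernel

/-- approximation property of the discrete kernel (abstract Theorem 5.4). -/
theorem stmt_9 {X W : Type*} [NormedAddCommGroup X] [InnerProductSpace ℝ X]
    [NormedAddCommGroup W] [NormedSpace ℝ W]
    (V : Submodule ℝ X) [FiniteDimensional ℝ V]
    (b : X →ₗ[ℝ] W →ₗ[ℝ] ℝ) (β M ε : ℝ) (hβ : 0 < β) (hM : 0 < M) (hε : 0 ≤ ε)
    (hbound : ∀ (x : X) (w : W), |b x w| ≤ M * ‖x‖ * ‖w‖)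
    (hinfsup : ∀ w : W, β * ‖w‖ ≤ ⨆ v : {v : X // v ∈ V ∧ v ≠ 0}, b v.1 w / ‖v.1‖)
    (u : X) (hcons : ∀ w : W, |b u w| ≤ ε * ‖w‖) :
    ∃ C > (0 : ℝ),
      Metric.infDist u {v : X | v ∈ V ∧ ∀ w : W, b v w = 0}
        ≤ (1 + C * β⁻¹) * Metric.infDist u (V : Set X) + β⁻¹ * ε :=
  ⟨M, hM, infDist_le_mul_infDist_add ⟨0, V.zero_mem⟩ (by positivity) fun _ hx =>
    infDist_ker_le_dist_add V b hβ hM.le hε hbound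
      (mul_norm_le_opNorm_flip_domRestrict V b hinfsup) hcons hx⟩
end
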